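/- arXiv:1111.1320 — 2 statements merged into one kernel-verified Lean document; each statement's English description precedes it below -/
import Mathlib

section
/- Regard left multiplication by the variables x_j and the odd divided difference operators ∂_i as additive endomorphisms of OPol_a, with products meaning composition of operators. Then the following relations hold in End(OPol_a): ∂_i∘∂_i = 0 for 1 ≤ i ≤ a−1; ∂_i∘∂_{i+1}∘∂_i = ∂_{i+1}∘∂_i∘∂_{i+1} for 1 ≤ i ≤ a−2; x_i∘∂_i + ∂_i∘x_{i+1} = 1 and ∂_i∘x_i + x_{i+1}∘∂_i = 1 for 1 ≤ i ≤ a−1; ∂_i∘∂_j + ∂_j∘∂_i = 0 whenever |i−j| > 1; and x_i∘∂_j + ∂_j∘x_i = 0 whenever i ≠ j and i ≠ j+1. -/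
open scoped BigOperators

/-- The defining anticommutation relations of the odd polynomial ring. -/
inductive OddRel (a : ℕ) : FreeAlgebra ℤ (Fin a) → FreeAlgebra ℤ (Fin a) → Prop
  | anticomm (i j : Fin a) (h : i ≠ j) :
      OddRel a (FreeAlgebra.ι ℤ i * FreeAlgebra.ι ℤ j)
        (-(FreeAlgebra.ι ℤ j * FreeAlgebra.ι ℤ i))

/-- The ring of odd polynomials in `a` variables over `ℤ`. -/
abbrev OPol (a : ℕ) : Type := RingQuot (OddRel a)

/-- The variable `x_{i+1}` (`0`-based index). -/
noncomputable def OX {a : ℕ} (i : Fin a) : OPol a :=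
  RingQuot.mkRingHom (OddRel a) (FreeAlgebra.ι ℤ i)

/-- The variable `x_i` (`1`-based index), `0` if out of range. -/
noncomputable def xv (a : ℕ) (i : ℕ) : OPol a :=
  if h : 1 ≤ i ∧ i ≤ a then OX ⟨i - 1, by omega⟩ else 0

/-- The signed variable `x̃_i = (−1)^{i−1} x_i` (`0`-based index, so the sign is `(−1)^i`). -/
noncomputable def xt (a : ℕ) (i : Fin a) : OPol a := (-1 : OPol a) ^ (i : ℕ) * OX i

/-- Odd elementary symmetric polynomial `ε_k`. -/
noncomputable def eps (a k : ℕ) : OPol a :=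
  ∑ t ∈ Finset.powersetCard k (Finset.univ : Finset (Fin a)),
    ((t.sort (· ≤ ·)).map (xt a)).prod

/-- Odd complete symmetric polynomial `h_k`. -/
noncomputable def hp (a k : ℕ) : OPol a :=
  ∑ σ : Sym (Fin a) k, (((σ : Multiset (Fin a)).sort (· ≤ ·)).map (xt a)).prod

/-- The ordered monomial `x_1^{c_1} ⋯ x_a^{c_a}`. -/
noncomputable def xmon {a : ℕ} (c : Fin a → ℕ) : OPol a :=
  ((List.finRange a).map fun i => OX i ^ c i).prod

/-- The staircase monomial `x^{δ_a} = x_1^{a−1} x_2^{a−2} ⋯ x_a^0`. -/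
noncomputable def xdelta (a : ℕ) : OPol a :=
  ((List.finRange a).map fun i => OX i ^ (a - 1 - (i : ℕ))).prod

/-- Composite of the operators `d i` along a word, leftmost letter acting last (outermost). -/
noncomputable def dword {a : ℕ} (d : ℕ → OPol a →+ OPol a) : List ℕ → (OPol a →+ OPol a)
  | [] => AddMonoidHom.id _
  | i :: l => (d i).comp (dword d l)

/-- The word `1, (2,1), (3,2,1), …, (a−1,…,2,1)` for the longest element, so that
`dword d (DList a) = ∂_1∘(∂_2∘∂_1)∘⋯∘(∂_{a−1}∘⋯∘∂_1) = D_a`. -/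
def DList (a : ℕ) : List ℕ :=
  ((List.range a).map fun b => (List.range b).reverse.map (· + 1)).flatten

/-- Left multiplication by `f` as a `ℤ`-linear endomorphism. -/
noncomputable def mulL {a : ℕ} (f : OPol a) : Module.End ℤ (OPol a) :=
  (AddMonoidHom.mulLeft f).toIntLinearMap

/-- The generators of the odd nilHecke ring inside `End_ℤ(OPol a)`. -/
noncomputable def onhGens (a : ℕ) (d : ℕ → OPol a →+ OPol a) :
    Set (Module.End ℤ (OPol a)) :=
  {T | (∃ i : Fin a, T = mulL (OX i)) ∨
    (∃ i : ℕ, 1 ≤ i ∧ i + 1 ≤ a ∧ T = (d i).toIntLinearMap)}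

/-- The simple transposition `s_i` (`1`-based) of `{1,…,a}`. -/
def sperm (a : ℕ) (i : ℕ) : Equiv.Perm (Fin a) :=
  if h : 1 ≤ i ∧ i + 1 ≤ a then Equiv.swap ⟨i - 1, by omega⟩ ⟨i, by omega⟩ else 1

/-- The permutation associated to a word in the simple transpositions. -/
def wordPerm (a : ℕ) (l : List ℕ) : Equiv.Perm (Fin a) := (l.map (sperm a)).prod

/-- Evaluation of an (even) multivariate polynomial at the squared variables `x_1², …, x_a²`. -/
noncomputable def sqEval {a : ℕ} (p : MvPolynomial (Fin a) ℤ) : OPol a :=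
  ∑ m ∈ p.support,
    MvPolynomial.coeff m p • ((List.finRange a).map fun i => OX i ^ (2 * m i)).prod

/-- The odd symmetrization operator `S(f) = (−1)^{C(a,3)} w₀(D_a(f·x^{δ_a}))`. -/
noncomputable def oddSymzn (a : ℕ) (d : ℕ → OPol a →+ OPol a) (W0 : OPol a →+* OPol a)
    (f : OPol a) : OPol a :=
  (-1 : OPol a) ^ Nat.choose a 3 * W0 (dword d (DList a) (f * xdelta a))

/-- The odd Schur polynomial `s_α = (−1)^{C(a,3)} w₀(D_a(x^α·x^{δ_a}))`. -/
noncomputable def schurP (a : ℕ) (d : ℕ → OPol a →+ OPol a) (W0 : OPol a →+* OPol a)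
    (α : Fin a → ℕ) : OPol a :=
  (-1 : OPol a) ^ Nat.choose a 3 * W0 (dword d (DList a) (xmon α * xdelta a))

/-- The 0-Hecke generator `∂̄_r = x_r ∘ ∂_r`. -/
noncomputable def dbar (a : ℕ) (d : ℕ → OPol a →+ OPol a) (r : ℕ) : OPol a →+ OPol a :=
  (AddMonoidHom.mulLeft (xv a r)).comp (d r)

/-- The `ℤ`-span of products of exactly `n` variables: the degree-`2n` component of `OPol a`. -/
def degComp (a n : ℕ) : Submodule ℤ (OPol a) :=
  Submodule.span ℤ {f : OPol a | ∃ l : List (Fin a), l.length = n ∧ f = (l.map OX).prod}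

/-- Odd Schubert polynomial `𝔰_w = ∂_{w⁻¹w₀}(x^{δ_a})` for a fixed choice `red` of
reduced expressions. -/
noncomputable def schubert (a : ℕ) (d : ℕ → OPol a →+ OPol a)
    (red : Equiv.Perm (Fin a) → List ℕ) (w : Equiv.Perm (Fin a)) : OPol a :=
  dword d (red (w⁻¹ * Fin.revPerm)) (xdelta a)

/-- Product of odd elementary symmetric polynomials along the parts of a partition,
in non-increasing order. -/
noncomputable def epsPart (a : ℕ) {n : ℕ} (p : Nat.Partition n) : OPol a :=
  (((p.parts.sort (· ≤ ·)).reverse).map (eps a)).prod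

/-! Each `∂_k` is an `s_k`-twisted derivation and `OPol a` is generated by the variables, so an
additive operator `T` vanishes as soon as `T 1 = 0` and `T g = 0` implies `T (x_j g) = 0`. For a
composite `T` of divided differences, the twisted Leibniz rule writes `T (x_j g)` as
`±x_{j'} · T g` plus shorter composites applied to `g`, with the integer coefficients
`∂_k x_{j''}`. These extra terms cancel because `s_k x_j = -x_{s_k(j)}`, which turns every
coefficient into a statement about simple transpositions acting on indices (including their braid
relation). -/

def IsTwistedDerivation {R : Type*} [Ring R] (σ : R →+* R) (D : R →+ R) : Prop :=
  ∀ f g, D (f * g) = D f * g + σ f * D g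

namespace IsTwistedDerivation

variable {R : Type*} [Ring R] {σ τ : R →+* R} {A B : R →+ R}

theorem map_one (hA : IsTwistedDerivation σ A) : A 1 = 0 := by
  simpa using hA 1 1

theorem map_intCast (hA : IsTwistedDerivation σ A) (n : ℤ) : A n = 0 := by
  rw [← zsmul_one, map_zsmul, hA.map_one, smul_zero]

theorem map_intCast_mul (hA : IsTwistedDerivation σ A) (n : ℤ) (g : R) :
    A (n * g) = n * A g := by
  rw [hA, hA.map_intCast, zero_mul, _root_.map_intCast, zero_add]

theorem apply_apply_mul (hA : IsTwistedDerivation σ A) (hB : IsTwistedDerivation τ B)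
    {x : R} {n k : ℤ} (hBx : B x = n) (hAτx : A (τ x) = k) (g : R) :
    A (B (x * g)) = n * A g + k * B g + σ (τ x) * A (B g) := by
  rw [hB, hBx, map_add, hA.map_intCast_mul, hA, hAτx, add_assoc]

end IsTwistedDerivation

theorem AddMonoidHom.eq_zero_of_closure_range_eq_top {R ι M : Type*} [Ring R] [AddGroup M]
    {x : ι → R} (hx : Subring.closure (Set.range x) = ⊤) (T : R →+ M) (h1 : T 1 = 0)
    (hT : ∀ i g, T g = 0 → T (x i * g) = 0) : T = 0 := by
  suffices ∀ f g, T g = 0 → T (f * g) = 0 from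
    AddMonoidHom.ext fun f => by simpa using this f 1 h1
  intro f
  induction (hx ▸ Subring.mem_top f : f ∈ Subring.closure (Set.range x)) using
    Subring.closure_induction with
  | mem _ h => obtain ⟨i, rfl⟩ := h; exact hT i
  | zero => simp
  | one => simp
  | add f f' _ _ hf hf' =>
    intro g hg
    rw [add_mul, map_add, hf g hg, hf' g hg, add_zero]
  | neg f _ hf =>
    intro g hg
    rw [neg_mul, map_neg, hf g hg, neg_zero]
  | mul f f' _ _ hf hf' =>
    intro g hg
    rw [mul_assoc]
    exact hf _ (hf' g hg)

def divDiffCoeff (k j : ℕ) : ℤ := if j = k ∨ j = k + 1 then 1 else 0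

section SimpleTranspositions

open Equiv

theorem divDiffCoeff_swap (k j : ℕ) : divDiffCoeff k (swap k (k + 1) j) = divDiffCoeff k j := by
  simp only [divDiffCoeff, swap_apply_def]
  split_ifs <;> omega

theorem divDiffCoeff_swap_of_far {k l : ℕ} (h : k + 1 < l ∨ l + 1 < k) (j : ℕ) :
    divDiffCoeff k (swap l (l + 1) j) = divDiffCoeff k j := by
  simp only [divDiffCoeff, swap_apply_def]
  split_ifs <;> omega

theorem divDiffCoeff_swap_swap (k j : ℕ) :
    divDiffCoeff k (swap (k + 1) (k + 1 + 1) (swap k (k + 1) j)) = divDiffCoeff (k + 1) j := by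
  simp only [divDiffCoeff, swap_apply_def]
  split_ifs <;> omega

theorem divDiffCoeff_succ_swap_swap (k j : ℕ) :
    divDiffCoeff (k + 1) (swap k (k + 1) (swap (k + 1) (k + 1 + 1) j)) = divDiffCoeff k j := by
  simp only [divDiffCoeff, swap_apply_def]
  split_ifs <;> omega

theorem swap_swap_comm_of_far {k l : ℕ} (h : k + 1 < l ∨ l + 1 < k) (j : ℕ) :
    swap k (k + 1) (swap l (l + 1) j) = swap l (l + 1) (swap k (k + 1) j) := by
  simp only [swap_apply_def]
  split_ifs <;> omega

theorem swap_swap_swap_succ (k j : ℕ) :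
    swap k (k + 1) (swap (k + 1) (k + 1 + 1) (swap k (k + 1) j)) =
      swap (k + 1) (k + 1 + 1) (swap k (k + 1) (swap (k + 1) (k + 1 + 1) j)) := by
  simp only [swap_apply_def]
  split_ifs <;> omega

end SimpleTranspositions

structure IsOddDividedDifference {R : Type*} [Ring R] (x : ℕ → R) (k : ℕ) (σ : R →+* R)
    (D : R →+ R) : Prop where
  isTwistedDerivation : IsTwistedDerivation σ D
  map_x (j : ℕ) : σ (x j) = -x (Equiv.swap k (k + 1) j)
  apply_x (j : ℕ) : D (x j) = divDiffCoeff k j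

namespace IsOddDividedDifference

open Equiv

variable {R : Type*} [Ring R] {x : ℕ → R} {k l : ℕ} {σ τ : R →+* R} {A B D : R →+ R}

theorem apply_x_mul (hD : IsOddDividedDifference x k σ D) (j : ℕ) (f : R) :
    D (x j * f) = divDiffCoeff k j * f - x (swap k (k + 1) j) * D f := by
  rw [hD.isTwistedDerivation, hD.apply_x, hD.map_x, neg_mul, sub_eq_add_neg]

theorem x_mul_apply_add_apply_x_succ_mul (hD : IsOddDividedDifference x k σ D) (f : R) :
    x k * D f + D (x (k + 1) * f) = f := by
  rw [hD.apply_x_mul, swap_apply_right, divDiffCoeff, if_pos (Or.inr rfl), Int.cast_one,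
    one_mul, add_sub_cancel]

theorem apply_x_mul_add_x_succ_mul_apply (hD : IsOddDividedDifference x k σ D) (f : R) :
    D (x k * f) + x (k + 1) * D f = f := by
  rw [hD.apply_x_mul, swap_apply_left, divDiffCoeff, if_pos (Or.inl rfl), Int.cast_one,
    one_mul, sub_add_cancel]

theorem x_mul_apply_add_apply_x_mul_eq_zero (hD : IsOddDividedDifference x k σ D) {j : ℕ}
    (hjk : j ≠ k) (hjk' : j ≠ k + 1) (f : R) :
    x j * D f + D (x j * f) = 0 := by
  rw [hD.apply_x_mul, swap_apply_of_ne_of_ne hjk hjk', divDiffCoeff, if_neg (by omega),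
    Int.cast_zero, zero_mul, zero_sub, add_neg_cancel]

theorem apply_apply_x_mul (hA : IsOddDividedDifference x k σ A)
    (hB : IsOddDividedDifference x l τ B) (j : ℕ) (g : R) :
    A (B (x j * g)) = divDiffCoeff l j * A g - divDiffCoeff k (swap l (l + 1) j) * B g +
      σ (τ (x j)) * A (B g) := by
  rw [hA.isTwistedDerivation.apply_apply_mul hB.isTwistedDerivation (hB.apply_x j)
    (by rw [hB.map_x, map_neg, hA.apply_x, ← Int.cast_neg]), Int.cast_neg, neg_mul,
    ← sub_eq_add_neg]

variable (hx : Subring.closure (Set.range x) = ⊤)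
include hx

theorem apply_apply_eq_zero (hD : IsOddDividedDifference x k σ D) (f : R) : D (D f) = 0 := by
  suffices D.comp D = 0 from DFunLike.congr_fun this f
  refine AddMonoidHom.eq_zero_of_closure_range_eq_top hx _
    (by simp [hD.isTwistedDerivation.map_one]) fun j g hg => ?_
  rw [AddMonoidHom.comp_apply] at hg ⊢
  rw [hD.apply_apply_x_mul hD, divDiffCoeff_swap, sub_self, zero_add, hg, mul_zero]

theorem apply_apply_apply_x_mul (hA : IsOddDividedDifference x k σ A)
    (hB : IsOddDividedDifference x l τ B) (j : ℕ) (g : R) :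
    A (B (A (x j * g))) = divDiffCoeff k j * A (B g) +
      divDiffCoeff k (swap l (l + 1) (swap k (k + 1) j)) * B (A g) +
      σ (τ (σ (x j))) * A (B (A g)) := by
  rw [hA.apply_x_mul, map_sub, map_sub, hB.isTwistedDerivation.map_intCast_mul,
    hA.isTwistedDerivation.map_intCast_mul, hA.apply_apply_x_mul hB,
    hA.apply_apply_eq_zero hx, hA.map_x, map_neg, map_neg]
  noncomm_ring

theorem apply_apply_add_apply_apply_eq_zero (hA : IsOddDividedDifference x k σ A)
    (hB : IsOddDividedDifference x l τ B) (hkl : k + 1 < l ∨ l + 1 < k) (f : R) :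
    A (B f) + B (A f) = 0 := by
  suffices A.comp B + B.comp A = 0 from DFunLike.congr_fun this f
  refine AddMonoidHom.eq_zero_of_closure_range_eq_top hx _
    (by simp [hA.isTwistedDerivation.map_one, hB.isTwistedDerivation.map_one]) fun j g hg => ?_
  have hστ : σ (τ (x j)) = τ (σ (x j)) := by
    rw [hA.map_x, hB.map_x, map_neg, map_neg, hA.map_x, hB.map_x, swap_swap_comm_of_far hkl]
  simp only [AddMonoidHom.add_apply, AddMonoidHom.comp_apply] at hg ⊢
  calc A (B (x j * g)) + B (A (x j * g))
      = σ (τ (x j)) * (A (B g) + B (A g)) := by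
        rw [hA.apply_apply_x_mul hB, hB.apply_apply_x_mul hA, divDiffCoeff_swap_of_far hkl,
          divDiffCoeff_swap_of_far hkl.symm, hστ]
        noncomm_ring
    _ = 0 := by rw [hg, mul_zero]

theorem braid (hA : IsOddDividedDifference x k σ A)
    (hB : IsOddDividedDifference x (k + 1) τ B) (f : R) :
    A (B (A f)) = B (A (B f)) := by
  suffices A.comp (B.comp A) - B.comp (A.comp B) = 0 from
    sub_eq_zero.1 (DFunLike.congr_fun this f)
  refine AddMonoidHom.eq_zero_of_closure_range_eq_top hx _
    (by simp [hA.isTwistedDerivation.map_one, hB.isTwistedDerivation.map_one]) fun j g hg => ?_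
  have hστσ : σ (τ (σ (x j))) = τ (σ (τ (x j))) := by
    simp only [hA.map_x, hB.map_x, map_neg, neg_neg, swap_swap_swap_succ]
  simp only [AddMonoidHom.sub_apply, AddMonoidHom.comp_apply] at hg ⊢
  calc A (B (A (x j * g))) - B (A (B (x j * g)))
      = σ (τ (σ (x j))) * (A (B (A g)) - B (A (B g))) := by
        rw [hA.apply_apply_apply_x_mul hx hB, hB.apply_apply_apply_x_mul hx hA,
          divDiffCoeff_swap_swap, divDiffCoeff_succ_swap_swap, hστσ]
        noncomm_ring
    _ = 0 := by rw [hg, mul_zero]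

end IsOddDividedDifference

theorem OPol.closure_range_xv (a : ℕ) : Subring.closure (Set.range (xv a)) = ⊤ := by
  refine (Subring.eq_top_iff' _).2 fun f => ?_
  obtain ⟨f, rfl⟩ := RingQuot.mkRingHom_surjective (OddRel a) f
  induction f using FreeAlgebra.induction with
  | grade0 n => simp
  | grade1 i => exact Subring.subset_closure ⟨i + 1, by simp [xv, OX]⟩
  | mul f f' hf hf' => rw [map_mul (RingQuot.mkRingHom _)]; exact mul_mem hf hf'
  | add f f' hf hf' => rw [map_add (RingQuot.mkRingHom _)]; exact add_mem hf hf'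

theorem IsOddDividedDifference.of_xv {a k : ℕ} {σ : OPol a →+* OPol a} {D : OPol a →+ OPol a}
    (hk : 1 ≤ k) (hka : k + 1 ≤ a) (hD : IsTwistedDerivation σ D)
    (hσ : ∀ j, 1 ≤ j → j ≤ a →
      σ (xv a j) = if j = k then -xv a (k + 1) else if j = k + 1 then -xv a k else -xv a j)
    (hDx : ∀ j, 1 ≤ j → j ≤ a → D (xv a j) = if j = k ∨ j = k + 1 then 1 else 0) :
    IsOddDividedDifference (xv a) k σ D where
  isTwistedDerivation := hD
  map_x j := by
    by_cases hj : 1 ≤ j ∧ j ≤ a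
    · rw [hσ j hj.1 hj.2, Equiv.swap_apply_def]
      split_ifs <;> rfl
    · rw [Equiv.swap_apply_of_ne_of_ne (by omega) (by omega), xv, dif_neg hj, map_zero,
        neg_zero]
  apply_x j := by
    by_cases hj : 1 ≤ j ∧ j ≤ a
    · rw [hDx j hj.1 hj.2, divDiffCoeff]
      push_cast
      rfl
    · rw [xv, dif_neg hj, map_zero, divDiffCoeff, if_neg (by omega), Int.cast_zero]

theorem odd_nilHecke_relations_general (a : ℕ)
    (s : ℕ → OPol a →+* OPol a)
    (hs : ∀ i j : ℕ, 1 ≤ i → i + 1 ≤ a → 1 ≤ j → j ≤ a →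
      s i (xv a j) =
        if j = i then -xv a (i + 1) else if j = i + 1 then -xv a i else -xv a j)
    (d : ℕ → OPol a →+ OPol a)
    (hdx : ∀ i j : ℕ, 1 ≤ i → i + 1 ≤ a → 1 ≤ j → j ≤ a →
      d i (xv a j) = if j = i ∨ j = i + 1 then 1 else 0)
    (hdL : ∀ i : ℕ, 1 ≤ i → i + 1 ≤ a → ∀ f g : OPol a,
      d i (f * g) = d i f * g + s i f * d i g) :
    (∀ i : ℕ, 1 ≤ i → i + 1 ≤ a → ∀ f : OPol a, d i (d i f) = 0) ∧
    (∀ i : ℕ, 1 ≤ i → i + 2 ≤ a → ∀ f : OPol a,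
      d i (d (i + 1) (d i f)) = d (i + 1) (d i (d (i + 1) f))) ∧
    (∀ i : ℕ, 1 ≤ i → i + 1 ≤ a → ∀ f : OPol a,
      xv a i * d i f + d i (xv a (i + 1) * f) = f) ∧
    (∀ i : ℕ, 1 ≤ i → i + 1 ≤ a → ∀ f : OPol a,
      d i (xv a i * f) + xv a (i + 1) * d i f = f) ∧
    (∀ i j : ℕ, 1 ≤ i → i + 1 ≤ a → 1 ≤ j → j + 1 ≤ a → (i + 1 < j ∨ j + 1 < i) →
      ∀ f : OPol a, d i (d j f) + d j (d i f) = 0) ∧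
    (∀ i j : ℕ, 1 ≤ i → i ≤ a → 1 ≤ j → j + 1 ≤ a → i ≠ j → i ≠ j + 1 →
      ∀ f : OPol a, xv a i * d j f + d j (xv a i * f) = 0) := by
  have hd : ∀ i, 1 ≤ i → i + 1 ≤ a → IsOddDividedDifference (xv a) i (s i) (d i) :=
    fun i hi hia => .of_xv hi hia (hdL i hi hia) (hs i · hi hia) (hdx i · hi hia)
  have hx := OPol.closure_range_xv a
  exact ⟨fun i hi hia => (hd i hi hia).apply_apply_eq_zero hx,
    fun i hi hia => (hd i hi (by omega)).braid hx (hd (i + 1) (by omega) hia),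
    fun i hi hia => (hd i hi hia).x_mul_apply_add_apply_x_succ_mul,
    fun i hi hia => (hd i hi hia).apply_x_mul_add_x_succ_mul_apply,
    fun i j hi hia hj hja hij =>
      (hd i hi hia).apply_apply_add_apply_apply_eq_zero hx (hd j hj hja) hij,
    fun i j _ _ hj hja hij hij' => (hd j hj hja).x_mul_apply_add_apply_x_mul_eq_zero hij hij'⟩

/-- the defining relations of the odd nilHecke algebra hold among the
odd divided difference operators and multiplication operators on `OPol a`. -/
theorem odd_nilHecke_relations (a : ℕ)
    (s : ℕ → OPol a →+* OPol a)
    (hs : ∀ i j : ℕ, 1 ≤ i → i + 1 ≤ a → 1 ≤ j → j ≤ a →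
      s i (xv a j) =
        if j = i then -xv a (i + 1) else if j = i + 1 then -xv a i else -xv a j)
    (d : ℕ → OPol a →+ OPol a)
    (hd1 : ∀ i : ℕ, 1 ≤ i → i + 1 ≤ a → d i 1 = 0)
    (hdx : ∀ i j : ℕ, 1 ≤ i → i + 1 ≤ a → 1 ≤ j → j ≤ a →
      d i (xv a j) = if j = i ∨ j = i + 1 then 1 else 0)
    (hdL : ∀ i : ℕ, 1 ≤ i → i + 1 ≤ a → ∀ f g : OPol a,
      d i (f * g) = d i f * g + s i f * d i g) :
    (∀ i : ℕ, 1 ≤ i → i + 1 ≤ a → ∀ f : OPol a, d i (d i f) = 0) ∧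
    (∀ i : ℕ, 1 ≤ i → i + 2 ≤ a → ∀ f : OPol a,
      d i (d (i + 1) (d i f)) = d (i + 1) (d i (d (i + 1) f))) ∧
    (∀ i : ℕ, 1 ≤ i → i + 1 ≤ a → ∀ f : OPol a,
      xv a i * d i f + d i (xv a (i + 1) * f) = f) ∧
    (∀ i : ℕ, 1 ≤ i → i + 1 ≤ a → ∀ f : OPol a,
      d i (xv a i * f) + xv a (i + 1) * d i f = f) ∧
    (∀ i j : ℕ, 1 ≤ i → i + 1 ≤ a → 1 ≤ j → j + 1 ≤ a → (i + 1 < j ∨ j + 1 < i) →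
      ∀ f : OPol a, d i (d j f) + d j (d i f) = 0) ∧
    (∀ i j : ℕ, 1 ≤ i → i ≤ a → 1 ≤ j → j + 1 ≤ a → i ≠ j → i ≠ j + 1 →
      ∀ f : OPol a, xv a i * d j f + d j (xv a i * f) = 0) :=
  odd_nilHecke_relations_general a s hs d hdx hdL
end

section
/- For every m ≥ 1, the identity Σ_{k=0}^{m} (−1)^{k(k+1)/2} ε_k h_{m−k} = 0 holds in OPol_a. -/
open scoped BigOperators

/-!
With `y_i = x̃_i`, the signed elementary polynomials `(-1)^{k(k+1)/2} ε_k` are the coefficients of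
`E(t) = (1 - y_a t) ⋯ (1 - y_1 t)`: the factors contribute `(-1)^k`, and reordering a decreasing
product of `k` pairwise anticommuting variables costs `(-1)^{k(k-1)/2}`. The complete polynomials
`h_k` are the coefficients of a series `H(t)` with `(1 - y_1 t) H_{1..a}(t) = H_{2..a}(t)`.
Adjoining the variables smallest first, `E H` telescopes to `1`; the identity is the vanishing of
its coefficient of `t^m`.
-/

open Finset PowerSeries

section Anticommute

variable {R : Type*} [Ring R]

theorem mul_list_prod_of_forall_anticomm {y : R} {l : List R}
    (h : ∀ x ∈ l, y * x = -(x * y)) : y * l.prod = (-1) ^ l.length * (l.prod * y) := by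
  induction l with
  | nil => simp
  | cons x l ih =>
    rw [List.forall_mem_cons] at h
    rw [List.prod_cons, ← mul_assoc, h.1, neg_mul, mul_assoc, ih h.2,
      ← ((Commute.neg_one_left x).pow_left _).left_comm]
    simp [pow_succ, mul_assoc]

theorem neg_one_pow_triangle_succ (k : ℕ) :
    (-1 : R) ^ ((k + 1) * (k + 1 + 1) / 2) = (-1) ^ (k * (k + 1) / 2) * (-1) ^ (k + 1) := by
  rw [← pow_add, show (k + 1) * (k + 1 + 1) = k * (k + 1) + 2 * (k + 1) by ring]
  congr 1
  omega

theorem pairwise_anticomm_neg_one_pow_mul {ι : Type*} {g : ι → R}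
    (hg : Pairwise fun i j => g i * g j = -(g j * g i)) (n : ι → ℕ) :
    Pairwise fun i j => (-1) ^ n i * g i * ((-1) ^ n j * g j)
      = -((-1) ^ n j * g j * ((-1) ^ n i * g i)) := by
  intro i j h
  have hc (k : ℕ) (y : R) : y * (-1) ^ k = (-1) ^ k * y :=
    ((Commute.neg_one_right y).pow_right k).eq
  simp only [mul_assoc, ← mul_assoc (g _), hc, hg h]
  simp only [← mul_assoc, ← pow_add, add_comm (n i), mul_neg]

end Anticommute

section OrderedSymmetric

variable {α R : Type*} [LinearOrder α] [Ring R] (f : α → R)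

def orderedEsymm (s : Finset α) (k : ℕ) : R :=
  ∑ t ∈ s.powersetCard k, ((t.sort (· ≤ ·)).map f).prod

def orderedHsymm (s : Finset α) (k : ℕ) : R :=
  ∑ σ ∈ s.sym k, (((σ : Multiset α).sort (· ≤ ·)).map f).prod

variable {f}

@[simp]
theorem orderedEsymm_zero (s : Finset α) : orderedEsymm f s 0 = 1 := by
  simp [orderedEsymm]

@[simp]
theorem orderedHsymm_zero (s : Finset α) : orderedHsymm f s 0 = 1 := by
  rw [orderedHsymm, sym_zero, sum_singleton]
  exact congrArg (List.prod ∘ List.map f) (Multiset.sort_zero _)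

@[simp]
theorem orderedEsymm_empty_succ (k : ℕ) : orderedEsymm f ∅ (k + 1) = 0 := by
  rw [orderedEsymm, powersetCard_eq_empty.mpr (by simp), sum_empty]

@[simp]
theorem orderedHsymm_empty_succ (k : ℕ) : orderedHsymm f ∅ (k + 1) = 0 := by
  simp [orderedHsymm]

theorem orderedEsymm_insert_succ {x : α} {s : Finset α} (hx : ∀ y ∈ s, x < y) (k : ℕ) :
    orderedEsymm f (insert x s) (k + 1)
      = orderedEsymm f s (k + 1) + f x * orderedEsymm f s k := by
  have hxs : x ∉ s := fun h => lt_irrefl x (hx x h)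
  rw [orderedEsymm, powersetCard_succ_insert hxs, sum_union, sum_image, orderedEsymm,
    orderedEsymm, mul_sum]
  · congr 1
    refine sum_congr rfl fun t ht => ?_
    have hts := (mem_powersetCard.mp ht).1
    rw [sort_insert _ (fun y hy => (hx y (hts hy)).le) (fun h => hxs (hts h)), List.map_cons,
      List.prod_cons]
  · intro t ht u hu htu
    have hxt : x ∉ t := fun h => hxs ((mem_powersetCard.mp ht).1 h)
    have hxu : x ∉ u := fun h => hxs ((mem_powersetCard.mp hu).1 h)
    rw [← erase_insert hxt, ← erase_insert hxu]
    exact congrArg (·.erase x) htu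
  · refine disjoint_left.mpr fun t ht ht' => ?_
    obtain ⟨u, -, rfl⟩ := mem_image.mp ht'
    exact hxs ((mem_powersetCard.mp ht).1 (mem_insert_self x u))

theorem orderedHsymm_insert_succ {x : α} {s : Finset α} (hx : ∀ y ∈ s, x < y) (k : ℕ) :
    orderedHsymm f (insert x s) (k + 1)
      = orderedHsymm f s (k + 1) + f x * orderedHsymm f (insert x s) k := by
  have hxs : x ∉ s := fun h => lt_irrefl x (hx x h)
  have h_without : ((insert x s).sym (k + 1)).filter (x ∉ ·) = s.sym (k + 1) := by
    ext σ
    simp only [mem_filter, mem_sym_iff, mem_insert]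
    exact ⟨fun ⟨h, hσ⟩ a ha => (h a ha).resolve_left (by rintro rfl; exact hσ ha),
      fun h => ⟨fun a ha => Or.inr (h a ha), fun hσ => hxs (h x hσ)⟩⟩
  have h_with : ((insert x s).sym (k + 1)).filter (x ∈ ·)
      = ((insert x s).sym k).image (Sym.cons x) := by
    ext σ
    simp only [mem_filter, mem_image, mem_sym_iff]
    constructor
    · rintro ⟨h, hσ⟩
      refine ⟨σ.erase x hσ, fun a ha => h a (Multiset.mem_of_mem_erase ha), Sym.cons_erase hσ⟩
    · rintro ⟨τ, hτ, rfl⟩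
      refine ⟨fun a ha => ?_, Sym.mem_cons_self x τ⟩
      rcases Sym.mem_cons.mp ha with rfl | ha
      exacts [mem_insert_self a s, hτ a ha]
  rw [orderedHsymm, ← sum_filter_add_sum_filter_not _ (x ∈ ·), h_without, h_with,
    sum_image fun τ _ υ _ h => (Sym.cons_inj_right x τ υ).mp h, add_comm, orderedHsymm,
    orderedHsymm, mul_sum]
  congr 1
  refine sum_congr rfl fun τ hτ => ?_
  have hxτ : ∀ b ∈ (τ : Multiset α), x ≤ b := fun b hb => by
    rcases mem_insert.mp (mem_sym_iff.mp hτ b hb) with rfl | hb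
    exacts [le_rfl, (hx b hb).le]
  rw [Sym.coe_cons, Multiset.sort_cons _ _ _ hxτ, List.map_cons, List.prod_cons]

theorem mul_orderedEsymm_of_anticomm (hf : Pairwise fun i j => f i * f j = -(f j * f i))
    {x : α} {s : Finset α} (hx : x ∉ s) (k : ℕ) :
    f x * orderedEsymm f s k = (-1) ^ k * (orderedEsymm f s k * f x) := by
  rw [orderedEsymm, mul_sum, sum_mul, mul_sum]
  refine sum_congr rfl fun t ht => ?_
  obtain ⟨hts, htk⟩ := mem_powersetCard.mp ht
  rw [mul_list_prod_of_forall_anticomm, List.length_map, length_sort, htk]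
  simp only [List.mem_map, mem_sort]
  rintro _ ⟨y, hy, rfl⟩
  exact hf (ne_of_mem_of_not_mem (hts hy) hx).symm

end OrderedSymmetric

section GeneratingSeries

variable {α R : Type*} [LinearOrder α] [Ring R] (f : α → R)

def altEsymmSeries (s : Finset α) : PowerSeries R :=
  mk fun k => (-1) ^ (k * (k + 1) / 2) * orderedEsymm f s k

def hsymmSeries (s : Finset α) : PowerSeries R :=
  mk (orderedHsymm f s)

variable {f}

theorem altEsymmSeries_empty : altEsymmSeries f (∅ : Finset α) = 1 := by
  ext (_ | k) <;> simp [altEsymmSeries, coeff_one]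

theorem hsymmSeries_empty : hsymmSeries f (∅ : Finset α) = 1 := by
  ext (_ | k) <;> simp [hsymmSeries, coeff_one]

theorem altEsymmSeries_insert (hf : Pairwise fun i j => f i * f j = -(f j * f i))
    {x : α} {s : Finset α} (hx : ∀ y ∈ s, x < y) :
    altEsymmSeries f (insert x s) = altEsymmSeries f s * (1 - C (f x) * X) := by
  have hxs : x ∉ s := fun h => lt_irrefl x (hx x h)
  rw [(commute_X (C (f x))).eq]
  ext (_ | k)
  · simp [altEsymmSeries]
  · rw [mul_sub, mul_one, map_sub, ← mul_assoc, coeff_mul_C, coeff_succ_mul_X]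
    simp only [altEsymmSeries, coeff_mk]
    rw [orderedEsymm_insert_succ hx, mul_orderedEsymm_of_anticomm hf hxs,
      neg_one_pow_triangle_succ]
    have h_odd : (-1 : R) ^ (k + 1) * (-1) ^ k = -1 := by
      rw [← pow_add, Odd.neg_one_pow ⟨k, by ring⟩]
    rw [mul_add, sub_eq_add_neg, mul_assoc _ _ ((-1) ^ k * _), ← mul_assoc ((-1) ^ (k + 1)),
      h_odd]
    simp [mul_assoc]

theorem one_sub_mul_hsymmSeries_insert {x : α} {s : Finset α} (hx : ∀ y ∈ s, x < y) :
    (1 - C (f x) * X) * hsymmSeries f (insert x s) = hsymmSeries f s := by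
  ext (_ | k)
  · simp [hsymmSeries]
  · rw [sub_mul, one_mul, map_sub, mul_assoc, coeff_C_mul, coeff_succ_X_mul]
    simp only [hsymmSeries, coeff_mk]
    rw [orderedHsymm_insert_succ hx]
    abel

theorem altEsymmSeries_mul_hsymmSeries (hf : Pairwise fun i j => f i * f j = -(f j * f i))
    (s : Finset α) : altEsymmSeries f s * hsymmSeries f s = 1 := by
  induction s using Finset.induction_on_min with
  | empty => rw [altEsymmSeries_empty, hsymmSeries_empty, one_mul]
  | insert x s hx ih =>
    rw [altEsymmSeries_insert hf hx, mul_assoc, one_sub_mul_hsymmSeries_insert hx, ih]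

theorem sum_neg_one_pow_orderedEsymm_mul_orderedHsymm
    (hf : Pairwise fun i j => f i * f j = -(f j * f i)) (s : Finset α) {m : ℕ} (hm : m ≠ 0) :
    ∑ k ∈ range (m + 1),
      (-1) ^ (k * (k + 1) / 2) * (orderedEsymm f s k * orderedHsymm f s (m - k)) = 0 := by
  have h := congrArg (coeff m) (altEsymmSeries_mul_hsymmSeries hf s)
  rw [coeff_mul, Nat.sum_antidiagonal_eq_sum_range_succ_mk, coeff_one, if_neg hm] at h
  simpa [altEsymmSeries, hsymmSeries, mul_assoc] using h

end GeneratingSeries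

theorem OX_mul_OX_of_ne {a : ℕ} {i j : Fin a} (h : i ≠ j) : OX i * OX j = -(OX j * OX i) := by
  simpa [OX] using RingQuot.mkRingHom_rel (OddRel.anticomm i j h)

theorem xt_pairwise_anticomm (a : ℕ) :
    Pairwise fun i j : Fin a => xt a i * xt a j = -(xt a j * xt a i) :=
  pairwise_anticomm_neg_one_pow_mul (fun _ _ => OX_mul_OX_of_ne) Fin.val

theorem eps_eq_orderedEsymm (a k : ℕ) : eps a k = orderedEsymm (xt a) univ k := rfl

theorem hp_eq_orderedHsymm (a k : ℕ) : hp a k = orderedHsymm (xt a) univ k := by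
  rw [orderedHsymm, sym_univ]
  rfl

/-- the identity Σ_{k=0}^m (−1)^{k(k+1)/2} ε_k h_{m−k} = 0 in OPol_a. -/
theorem odd_elementary_complete_relation (a m : ℕ) (hm : 1 ≤ m) :
    ∑ k ∈ Finset.range (m + 1),
      (-1 : OPol a) ^ (k * (k + 1) / 2) * (eps a k * hp a (m - k)) = 0 := by
  simpa only [eps_eq_orderedEsymm, hp_eq_orderedHsymm] using
    sum_neg_one_pow_orderedEsymm_mul_orderedHsymm (xt_pairwise_anticomm a) univ
      (Nat.one_le_iff_ne_zero.mp hm)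
end
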